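/- arXiv:2306.15030 — 2 statements merged into one kernel-verified Lean document; each statement's English description precedes it below -/
import Mathlib

section
/- Let G be a compact topological group acting continuously by isometries on the Euclidean space X = ℝⁿ, let p ≥ 1, let c(x,y) = dist(x,y)^p, and let ν₁, ν₂ be G-invariant probability measures on X. If there exists an optimal coupling of ν₁ and ν₂ for the cost c, then there exists an optimal coupling of ν₁ and ν₂ for c that is invariant under the diagonal action of G on X × X. (Lemma 1.) -/
/-!
Average an optimal coupling `π` over the normalized Haar measure `μ` of `G`, i.e. take
`π̄ = ∫ g • π dμ(g)`. Left invariance of `μ` makes `π̄` invariant under the diagonal action.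
Taking marginals commutes with averaging, and the average of a `G`-invariant measure is itself,
so `π̄` is again a coupling of `ν₁` and `ν₂`. Since the action is isometric, the cost is
invariant, so `π̄` has the same cost as `π` and is therefore optimal.
-/

open MeasureTheory

namespace MeasureTheory.Measure

section SMul

variable {G Z : Type*} [MeasurableSpace G] [MeasurableSpace Z] [SMul G Z]

noncomputable def orbitAverage (μ : Measure G) (ν : Measure Z) : Measure Z :=
  (μ.prod ν).map (Function.uncurry (· • ·))

variable [MeasurableSMul₂ G Z]

instance isProbabilityMeasure_orbitAverage (μ : Measure G) (ν : Measure Z)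
    [IsProbabilityMeasure μ] [IsProbabilityMeasure ν] :
    IsProbabilityMeasure (orbitAverage μ ν) :=
  isProbabilityMeasure_map measurable_smul.aemeasurable

theorem orbitAverage_eq_self (μ : Measure G) [IsProbabilityMeasure μ] {ν : Measure Z}
    [SFinite ν] (hν : ∀ g : G, ν.map (g • ·) = ν) : orbitAverage μ ν = ν := by
  ext s hs
  have slice (g : G) : ν (Prod.mk g ⁻¹' (Function.uncurry (· • ·) ⁻¹' s)) = ν s := by
    conv_rhs => rw [← hν g, map_apply (measurable_const_smul g) hs]
    rfl
  rw [orbitAverage, map_apply measurable_smul hs, prod_apply (measurable_smul hs)]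
  simp [slice]

theorem map_orbitAverage_of_equivariant {Y : Type*} [MeasurableSpace Y] [SMul G Y]
    [MeasurableSMul₂ G Y] (μ : Measure G) [SFinite μ] (ν : Measure Z) [SFinite ν] {f : Z → Y}
    (hf : Measurable f) (hf_equiv : ∀ (g : G) (z : Z), f (g • z) = g • f z) :
    (orbitAverage μ ν).map f = orbitAverage μ (ν.map f) := by
  have hcomm : f ∘ Function.uncurry (· • ·) = Function.uncurry (· • ·) ∘ Prod.map id f :=
    funext fun q => hf_equiv q.1 q.2
  rw [orbitAverage, orbitAverage, map_map hf measurable_smul, hcomm,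
    ← map_map measurable_smul (measurable_id.prodMap hf),
    ← map_prod_map μ ν measurable_id hf, map_id]

theorem integral_orbitAverage_of_invariant {E : Type*} [NormedAddCommGroup E] [NormedSpace ℝ E]
    (μ : Measure G) [IsProbabilityMeasure μ] (ν : Measure Z) [SFinite ν] {f : Z → E}
    (hf : StronglyMeasurable f) (hf_inv : ∀ (g : G) (z : Z), f (g • z) = f z) :
    ∫ z, f z ∂orbitAverage μ ν = ∫ z, f z ∂ν := by
  rw [orbitAverage, integral_map measurable_smul.aemeasurable hf.aestronglyMeasurable]
  simp_rw [Function.uncurry_def, hf_inv]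
  rw [← integral_map measurable_snd.aemeasurable hf.aestronglyMeasurable, map_snd_prod,
    measure_univ, one_smul]

end SMul

theorem map_smul_orbitAverage {G Z : Type*} [MeasurableSpace G] [MeasurableSpace Z] [Monoid G]
    [MulAction G Z] [MeasurableMul G] [MeasurableSMul₂ G Z] (μ : Measure G) [SFinite μ]
    [IsMulLeftInvariant μ] (ν : Measure Z) [SFinite ν] (g : G) :
    (orbitAverage μ ν).map (g • ·) = orbitAverage μ ν := by
  have hcomm : (g • · : Z → Z) ∘ Function.uncurry (· • ·) =
      Function.uncurry (· • ·) ∘ Prod.map (g * ·) id :=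
    funext fun q => (mul_smul g q.1 q.2).symm
  rw [orbitAverage, map_map (measurable_const_smul g) measurable_smul, hcomm,
    ← map_map measurable_smul ((measurable_const_mul g).prodMap measurable_id),
    ← map_prod_map μ ν (measurable_const_mul g) measurable_id, map_id, map_mul_left_eq_self]

theorem isProbabilityMeasure_haarMeasure_top {G : Type*} [Group G] [TopologicalSpace G]
    [IsTopologicalGroup G] [CompactSpace G] [MeasurableSpace G] [BorelSpace G] :
    IsProbabilityMeasure (haarMeasure (⊤ : TopologicalSpace.PositiveCompacts G)) :=
  ⟨by rw [← TopologicalSpace.PositiveCompacts.coe_top (α := G)]; exact haarMeasure_self⟩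

end MeasureTheory.Measure

open Measure in
theorem equivariant_ot_lemma1_general
    {n : ℕ} {G : Type*} [Group G] [TopologicalSpace G] [CompactSpace G] [IsTopologicalGroup G]
    [MulAction G (EuclideanSpace ℝ (Fin n))]
    [ContinuousSMul G (EuclideanSpace ℝ (Fin n))]
    (hiso : ∀ (g : G) (x y : EuclideanSpace ℝ (Fin n)), dist (g • x) (g • y) = dist x y)
    (p : ℝ)
    (c : EuclideanSpace ℝ (Fin n) × EuclideanSpace ℝ (Fin n) → ℝ)
    (hc : ∀ x y : EuclideanSpace ℝ (Fin n), c (x, y) = dist x y ^ p)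
    (ν₁ ν₂ : Measure (EuclideanSpace ℝ (Fin n)))
    [IsProbabilityMeasure ν₁] [IsProbabilityMeasure ν₂]
    (hν₁ : ∀ g : G, ν₁.map (fun x => g • x) = ν₁)
    (hν₂ : ∀ g : G, ν₂.map (fun x => g • x) = ν₂)
    (π : Measure (EuclideanSpace ℝ (Fin n) × EuclideanSpace ℝ (Fin n)))
    [IsProbabilityMeasure π]
    (hπ₁ : π.map Prod.fst = ν₁) (hπ₂ : π.map Prod.snd = ν₂)
    (hopt : ∀ π' : Measure (EuclideanSpace ℝ (Fin n) × EuclideanSpace ℝ (Fin n)),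
      IsProbabilityMeasure π' → π'.map Prod.fst = ν₁ → π'.map Prod.snd = ν₂ →
      ∫ z, c z ∂π ≤ ∫ z, c z ∂π') :
    ∃ πbar : Measure (EuclideanSpace ℝ (Fin n) × EuclideanSpace ℝ (Fin n)),
      IsProbabilityMeasure πbar ∧
      πbar.map Prod.fst = ν₁ ∧ πbar.map Prod.snd = ν₂ ∧
      (∀ π' : Measure (EuclideanSpace ℝ (Fin n) × EuclideanSpace ℝ (Fin n)),
        IsProbabilityMeasure π' → π'.map Prod.fst = ν₁ → π'.map Prod.snd = ν₂ →
        ∫ z, c z ∂πbar ≤ ∫ z, c z ∂π') ∧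
      (∀ g : G, πbar.map (fun z : EuclideanSpace ℝ (Fin n) × EuclideanSpace ℝ (Fin n) =>
        g • z) = πbar) := by
  borelize G
  let μ := haarMeasure (⊤ : TopologicalSpace.PositiveCompacts G)
  have : IsProbabilityMeasure μ := isProbabilityMeasure_haarMeasure_top
  have hc_eq : c = fun z => dist z.1 z.2 ^ p := funext fun z => hc z.1 z.2
  have hc_meas : StronglyMeasurable c :=
    hc_eq ▸ (continuous_dist.measurable.pow_const p).stronglyMeasurable
  have hc_inv (g : G) (z) : c (g • z) = c z := by
    rw [hc_eq]
    exact congrArg (· ^ p) (hiso g z.1 z.2)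
  refine ⟨orbitAverage μ π, inferInstance, ?_, ?_, fun π' hπ' h₁ h₂ => ?_, map_smul_orbitAverage μ π⟩
  · rw [map_orbitAverage_of_equivariant μ π measurable_fst fun _ _ => rfl, hπ₁,
      orbitAverage_eq_self μ hν₁]
  · rw [map_orbitAverage_of_equivariant μ π measurable_snd fun _ _ => rfl, hπ₂,
      orbitAverage_eq_self μ hν₂]
  · rw [integral_orbitAverage_of_invariant μ π hc_meas hc_inv]
    exact hopt π' hπ' h₁ h₂

/-- **Lemma 1.** Let `G` be a compact topological group acting continuously by isometries on
the Euclidean space `X = ℝⁿ`, let `p ≥ 1`, let `c (x, y) = dist x y ^ p`, and let `ν₁, ν₂` be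
`G`-invariant probability measures on `X`. If there exists an optimal coupling of `ν₁` and `ν₂`
for the cost `c`, then there exists an optimal coupling of `ν₁` and `ν₂` for `c` that is
invariant under the diagonal action of `G` on `X × X`. -/
theorem equivariant_ot_lemma1
    {n : ℕ} {G : Type*} [Group G] [TopologicalSpace G] [CompactSpace G] [IsTopologicalGroup G]
    [MulAction G (EuclideanSpace ℝ (Fin n))]
    [ContinuousSMul G (EuclideanSpace ℝ (Fin n))]
    (hiso : ∀ (g : G) (x y : EuclideanSpace ℝ (Fin n)), dist (g • x) (g • y) = dist x y)
    (p : ℝ) (hp : 1 ≤ p)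
    (c : EuclideanSpace ℝ (Fin n) × EuclideanSpace ℝ (Fin n) → ℝ)
    (hc : ∀ x y : EuclideanSpace ℝ (Fin n), c (x, y) = dist x y ^ p)
    (ν₁ ν₂ : Measure (EuclideanSpace ℝ (Fin n)))
    [IsProbabilityMeasure ν₁] [IsProbabilityMeasure ν₂]
    (hν₁ : ∀ g : G, ν₁.map (fun x => g • x) = ν₁)
    (hν₂ : ∀ g : G, ν₂.map (fun x => g • x) = ν₂)
    (π : Measure (EuclideanSpace ℝ (Fin n) × EuclideanSpace ℝ (Fin n)))
    [IsProbabilityMeasure π]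
    (hπ₁ : π.map Prod.fst = ν₁) (hπ₂ : π.map Prod.snd = ν₂)
    (hopt : ∀ π' : Measure (EuclideanSpace ℝ (Fin n) × EuclideanSpace ℝ (Fin n)),
      IsProbabilityMeasure π' → π'.map Prod.fst = ν₁ → π'.map Prod.snd = ν₂ →
      ∫ z, c z ∂π ≤ ∫ z, c z ∂π') :
    ∃ πbar : Measure (EuclideanSpace ℝ (Fin n) × EuclideanSpace ℝ (Fin n)),
      IsProbabilityMeasure πbar ∧
      πbar.map Prod.fst = ν₁ ∧ πbar.map Prod.snd = ν₂ ∧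
      (∀ π' : Measure (EuclideanSpace ℝ (Fin n) × EuclideanSpace ℝ (Fin n)),
        IsProbabilityMeasure π' → π'.map Prod.fst = ν₁ → π'.map Prod.snd = ν₂ →
        ∫ z, c z ∂πbar ≤ ∫ z, c z ∂π') ∧
      (∀ g : G, πbar.map (fun z : EuclideanSpace ℝ (Fin n) × EuclideanSpace ℝ (Fin n) =>
        g • z) = πbar) :=
  equivariant_ot_lemma1_general hiso p c hc ν₁ ν₂ hν₁ hν₂ π hπ₁ hπ₂ hopt
end

section
/- Let G be a compact topological group acting continuously by isometries on the Euclidean space X = ℝⁿ, let p ≥ 1, let c(x,y) = dist(x,y)^p, and let ν₁, ν₂ be G-invariant probability measures on X. Suppose the coupling of ν₁, ν₂ induced by pushing forward ν₁ under x ↦ (x, T(x)) is the unique optimal coupling for cost c. Then this optimal coupling is invariant under the diagonal action of G on X × X, and the optimal transport map T is G-equivariant ν₁-almost everywhere, i.e. T(g•x) = g•T(x) for every g ∈ G and ν₁-almost every x. (Theorem 1, part 1.) -/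
open MeasureTheory

/-!
Each `g ∈ G` acts diagonally on `X × X` preserving both marginals and the cost, so it maps
optimal couplings to optimal couplings; by uniqueness it fixes the optimal coupling `π`.
Since `π` is the image of `ν₁` under `x ↦ (x, T x)`, invariance of `π` under `g` says that it is
also the image of `ν₁` under `x ↦ (g • x, g • T x)`, and `π` lives on the graph of `T`, so
`g • T x = T (g • x)` for `ν₁`-almost every `x`.
-/

namespace MeasureTheory.Measure

variable {X Y : Type*} [MeasurableSpace X] [MeasurableSpace Y]

def IsCoupling (π : Measure (X × Y)) (μ : Measure X) (ν : Measure Y) : Prop :=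
  IsProbabilityMeasure π ∧ π.map Prod.fst = μ ∧ π.map Prod.snd = ν

def IsOptimalCoupling (c : X × Y → ℝ) (π : Measure (X × Y)) (μ : Measure X) (ν : Measure Y) :
    Prop :=
  π.IsCoupling μ ν ∧ ∀ π' : Measure (X × Y), π'.IsCoupling μ ν → ∫ z, c z ∂π ≤ ∫ z, c z ∂π'

variable {π : Measure (X × Y)} {μ : Measure X} {ν : Measure Y} {f : X → X} {g : Y → Y}

theorem IsCoupling.map_prodMap (hπ : π.IsCoupling μ ν) (hf : Measurable f) (hg : Measurable g)
    (hμ : μ.map f = μ) (hν : ν.map g = ν) : (π.map (Prod.map f g)).IsCoupling μ ν := by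
  obtain ⟨hprob, hfst, hsnd⟩ := hπ
  have hfg := hf.prodMap hg
  refine ⟨isProbabilityMeasure_map hfg.aemeasurable, ?_, ?_⟩
  · rw [map_map measurable_fst hfg, Prod.map_fst', ← map_map hf measurable_fst, hfst, hμ]
  · rw [map_map measurable_snd hfg, Prod.map_snd', ← map_map hg measurable_snd, hsnd, hν]

theorem integral_map_prodMap_of_comp_eq {c : X × Y → ℝ} (hc : Measurable c)
    (hf : Measurable f) (hg : Measurable g) (hcfg : ∀ z, c (Prod.map f g z) = c z) :
    ∫ z, c z ∂π.map (Prod.map f g) = ∫ z, c z ∂π := by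
  rw [integral_map (hf.prodMap hg).aemeasurable hc.aestronglyMeasurable]
  simp only [hcfg]

theorem IsOptimalCoupling.map_prodMap {c : X × Y → ℝ} (hπ : π.IsOptimalCoupling c μ ν)
    (hc : Measurable c) (hf : Measurable f) (hg : Measurable g) (hμ : μ.map f = μ)
    (hν : ν.map g = ν) (hcfg : ∀ z, c (Prod.map f g z) = c z) :
    (π.map (Prod.map f g)).IsOptimalCoupling c μ ν := by
  refine ⟨hπ.1.map_prodMap hf hg hμ hν, fun π' hπ' => ?_⟩
  rw [integral_map_prodMap_of_comp_eq hc hf hg hcfg]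
  exact hπ.2 π' hπ'

theorem IsOptimalCoupling.map_prodMap_eq_of_unique {c : X × Y → ℝ}
    (hπ : π.IsOptimalCoupling c μ ν) (huniq : ∀ π', π'.IsOptimalCoupling c μ ν → π' = π)
    (hc : Measurable c) (hf : Measurable f) (hg : Measurable g) (hμ : μ.map f = μ)
    (hν : ν.map g = ν) (hcfg : ∀ z, c (Prod.map f g z) = c z) :
    π.map (Prod.map f g) = π :=
  huniq _ (hπ.map_prodMap hc hf hg hμ hν hcfg)

theorem ae_comp_eq_of_map_graph_invariant [MeasurableEq Y] {T : X → Y} (hT : Measurable T)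
    (hf : Measurable f) (hg : Measurable g)
    (hinv : (μ.map fun x => (x, T x)).map (Prod.map f g) = μ.map fun x => (x, T x)) :
    ∀ᵐ x ∂μ, T (f x) = g (T x) := by
  have hgraph : Measurable fun x => (x, T x) := measurable_id.prodMk hT
  have hgraph_set : MeasurableSet {z : X × Y | T z.1 = z.2} :=
    measurableSet_eq_fun (hT.comp measurable_fst) measurable_snd
  have hon_graph : ∀ᵐ z ∂μ.map fun x => (x, T x), T z.1 = z.2 :=
    (ae_map_iff hgraph.aemeasurable hgraph_set).2 (ae_of_all _ fun _ => rfl)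
  rw [← hinv, map_map (hf.prodMap hg) hgraph] at hon_graph
  exact ae_of_ae_map ((hf.prodMap hg).comp hgraph).aemeasurable hon_graph

end MeasureTheory.Measure

open Measure in
theorem equivariant_ot_theorem1_part1_general
    {n : ℕ} {G : Type*} [Group G]
    [MulAction G (EuclideanSpace ℝ (Fin n))]
    (hiso : ∀ (g : G) (x y : EuclideanSpace ℝ (Fin n)), dist (g • x) (g • y) = dist x y)
    (p : ℝ)
    (c : EuclideanSpace ℝ (Fin n) × EuclideanSpace ℝ (Fin n) → ℝ)
    (hc : ∀ x y : EuclideanSpace ℝ (Fin n), c (x, y) = dist x y ^ p)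
    (ν₁ ν₂ : Measure (EuclideanSpace ℝ (Fin n)))
    [IsProbabilityMeasure ν₁]
    (hν₁ : ∀ g : G, ν₁.map (fun x => g • x) = ν₁)
    (hν₂ : ∀ g : G, ν₂.map (fun x => g • x) = ν₂)
    (T : EuclideanSpace ℝ (Fin n) → EuclideanSpace ℝ (Fin n))
    (hT : Measurable T)
    (π : Measure (EuclideanSpace ℝ (Fin n) × EuclideanSpace ℝ (Fin n)))
    (hπ : π = ν₁.map (fun x => (x, T x)))
    (hπ₁ : π.map Prod.fst = ν₁) (hπ₂ : π.map Prod.snd = ν₂)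
    (hopt : ∀ π' : Measure (EuclideanSpace ℝ (Fin n) × EuclideanSpace ℝ (Fin n)),
      IsProbabilityMeasure π' → π'.map Prod.fst = ν₁ → π'.map Prod.snd = ν₂ →
      ∫ z, c z ∂π ≤ ∫ z, c z ∂π')
    (huniq : ∀ π' : Measure (EuclideanSpace ℝ (Fin n) × EuclideanSpace ℝ (Fin n)),
      IsProbabilityMeasure π' → π'.map Prod.fst = ν₁ → π'.map Prod.snd = ν₂ →
      (∀ π'' : Measure (EuclideanSpace ℝ (Fin n) × EuclideanSpace ℝ (Fin n)),
        IsProbabilityMeasure π'' → π''.map Prod.fst = ν₁ → π''.map Prod.snd = ν₂ →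
        ∫ z, c z ∂π' ≤ ∫ z, c z ∂π'') →
      π' = π) :
    (∀ g : G, π.map (fun z : EuclideanSpace ℝ (Fin n) × EuclideanSpace ℝ (Fin n) =>
      g • z) = π) ∧
    (∀ g : G, ∀ᵐ x ∂ν₁, T (g • x) = g • T x) := by
  have hsmul (g : G) : Measurable fun x : EuclideanSpace ℝ (Fin n) => g • x :=
    (Isometry.of_dist_eq (hiso g)).continuous.measurable
  have hc_meas : Measurable c := by
    rw [show c = fun z => dist z.1 z.2 ^ p from funext fun z => hc z.1 z.2]
    fun_prop
  have hc_inv (g : G) (z) : c (Prod.map (g • ·) (g • ·) z) = c z := by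
    simp only [Prod.map, hc, hiso]
  have hprob : IsProbabilityMeasure π := hπ ▸ isProbabilityMeasure_map (by fun_prop)
  have hπ_opt : π.IsOptimalCoupling c ν₁ ν₂ :=
    ⟨⟨hprob, hπ₁, hπ₂⟩, fun π' ⟨h, h₁, h₂⟩ => hopt π' h h₁ h₂⟩
  have hπ_unique (π') (hπ' : π'.IsOptimalCoupling c ν₁ ν₂) : π' = π :=
    huniq π' hπ'.1.1 hπ'.1.2.1 hπ'.1.2.2 fun π'' h h₁ h₂ => hπ'.2 π'' ⟨h, h₁, h₂⟩
  have hπ_inv (g : G) : π.map (fun z => g • z) = π :=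
    hπ_opt.map_prodMap_eq_of_unique hπ_unique hc_meas (hsmul g) (hsmul g) (hν₁ g) (hν₂ g) (hc_inv g)
  exact ⟨hπ_inv, fun g =>
    ae_comp_eq_of_map_graph_invariant hT (hsmul g) (hsmul g) (hπ ▸ hπ_inv g)⟩

/-- **Theorem 1, part 1.** Let `G` be a compact topological group acting continuously by
isometries on the Euclidean space `X = ℝⁿ`, let `p ≥ 1`, let `c (x, y) = dist x y ^ p`, and
let `ν₁, ν₂` be `G`-invariant probability measures on `X`. Suppose the coupling of `ν₁, ν₂`
induced by pushing forward `ν₁` under `x ↦ (x, T x)` is the unique optimal coupling for the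
cost `c`. Then this optimal coupling is invariant under the diagonal action of `G` on
`X × X`, and the optimal transport map `T` is `G`-equivariant `ν₁`-almost everywhere,
i.e. `T (g • x) = g • T x` for every `g ∈ G` and `ν₁`-almost every `x`. -/
theorem equivariant_ot_theorem1_part1
    {n : ℕ} {G : Type*} [Group G] [TopologicalSpace G] [CompactSpace G] [IsTopologicalGroup G]
    [MulAction G (EuclideanSpace ℝ (Fin n))]
    [ContinuousSMul G (EuclideanSpace ℝ (Fin n))]
    (hiso : ∀ (g : G) (x y : EuclideanSpace ℝ (Fin n)), dist (g • x) (g • y) = dist x y)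
    (p : ℝ) (hp : 1 ≤ p)
    (c : EuclideanSpace ℝ (Fin n) × EuclideanSpace ℝ (Fin n) → ℝ)
    (hc : ∀ x y : EuclideanSpace ℝ (Fin n), c (x, y) = dist x y ^ p)
    (ν₁ ν₂ : Measure (EuclideanSpace ℝ (Fin n)))
    [IsProbabilityMeasure ν₁] [IsProbabilityMeasure ν₂]
    (hν₁ : ∀ g : G, ν₁.map (fun x => g • x) = ν₁)
    (hν₂ : ∀ g : G, ν₂.map (fun x => g • x) = ν₂)
    (T : EuclideanSpace ℝ (Fin n) → EuclideanSpace ℝ (Fin n))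
    (hT : Measurable T)
    (π : Measure (EuclideanSpace ℝ (Fin n) × EuclideanSpace ℝ (Fin n)))
    (hπ : π = ν₁.map (fun x => (x, T x)))
    (hπ₁ : π.map Prod.fst = ν₁) (hπ₂ : π.map Prod.snd = ν₂)
    (hopt : ∀ π' : Measure (EuclideanSpace ℝ (Fin n) × EuclideanSpace ℝ (Fin n)),
      IsProbabilityMeasure π' → π'.map Prod.fst = ν₁ → π'.map Prod.snd = ν₂ →
      ∫ z, c z ∂π ≤ ∫ z, c z ∂π')
    (huniq : ∀ π' : Measure (EuclideanSpace ℝ (Fin n) × EuclideanSpace ℝ (Fin n)),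
      IsProbabilityMeasure π' → π'.map Prod.fst = ν₁ → π'.map Prod.snd = ν₂ →
      (∀ π'' : Measure (EuclideanSpace ℝ (Fin n) × EuclideanSpace ℝ (Fin n)),
        IsProbabilityMeasure π'' → π''.map Prod.fst = ν₁ → π''.map Prod.snd = ν₂ →
        ∫ z, c z ∂π' ≤ ∫ z, c z ∂π'') →
      π' = π) :
    (∀ g : G, π.map (fun z : EuclideanSpace ℝ (Fin n) × EuclideanSpace ℝ (Fin n) =>
      g • z) = π) ∧
    (∀ g : G, ∀ᵐ x ∂ν₁, T (g • x) = g • T x) :=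
  equivariant_ot_theorem1_part1_general hiso p c hc ν₁ ν₂ hν₁ hν₂ T hT π hπ hπ₁ hπ₂ hopt huniq
end
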